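/- arXiv:1008.4329 — 8 statements merged into one kernel-verified Lean document; each statement's English description precedes it below -/
import Mathlib

section
/- Let P : ℝ² → ℝ be defined by P(x) = (1/2)·xᵀAx - fᵀx with A = [[-2,-1],[-1,-3]] and f = (-1,-1). Then x̄ = (1,0) satisfies (A + I)x̄ = f, x̄ lies on the unit circle (so (1/2)‖x̄‖² ≤ 1/2), and x̄ is not a local minimizer of P on the closed unit disk {x : ‖x‖ ≤ 1}. -/
open Matrix Filter Topology

theorem not_local_min_on_disk
    (A : Matrix (Fin 2) (Fin 2) ℝ) (hA : A = !![-2, -1; -1, -3])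
    (f : Fin 2 → ℝ) (hf : f = ![-1, -1])
    (P : (Fin 2 → ℝ) → ℝ)
    (hP : ∀ x, P x = (1 / 2 : ℝ) * (x ⬝ᵥ A.mulVec x) - f ⬝ᵥ x)
    (xb : Fin 2 → ℝ) (hxb : xb = ![1, 0]) :
    (A + 1).mulVec xb = f ∧
    (xb 0) ^ 2 + (xb 1) ^ 2 = 1 ∧
    (1 / 2 : ℝ) * ((xb 0) ^ 2 + (xb 1) ^ 2) ≤ 1 / 2 ∧
    ¬ IsLocalMinOn P {x : Fin 2 → ℝ | (x 0) ^ 2 + (x 1) ^ 2 ≤ 1} xb := by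
  subst hA hf hxb
  have hPval : ∀ x : Fin 2 → ℝ,
      P x = (1/2 : ℝ) * ((-2) * x 0 * x 0 + (-1) * x 0 * x 1 + (-1) * x 1 * x 0
        + (-3) * x 1 * x 1) - ((-1) * x 0 + (-1) * x 1) := by
    intro x
    rw [hP]
    simp [Matrix.mulVec, dotProduct, Fin.sum_univ_two]
    ring
  refine ⟨?_, by norm_num, by norm_num, ?_⟩
  · funext i
    fin_cases i <;>
      simp [Matrix.mulVec, dotProduct, Fin.sum_univ_two, Matrix.one_apply] <;> norm_num
  · intro h
    set γ : ℝ → (Fin 2 → ℝ) := fun ε => ![1 - ε^2, ε] with hγ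
    have hcont : Continuous γ := by
      apply continuous_pi; intro i; fin_cases i <;> simp [γ] <;> fun_prop
    have h0 : γ 0 = ![1, 0] := by
      funext i; fin_cases i <;> simp [γ]
    have htend : Tendsto γ (𝓝[>] (0:ℝ))
        (𝓝[{x : Fin 2 → ℝ | (x 0) ^ 2 + (x 1) ^ 2 ≤ 1}] ![1, 0]) := by
      apply tendsto_nhdsWithin_of_tendsto_nhds_of_eventually_within
      · have := hcont.tendsto 0
        rw [h0] at this
        exact this.mono_left nhdsWithin_le_nhds
      · filter_upwards [Ioo_mem_nhdsGT_of_mem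
          (by norm_num : (0:ℝ) ∈ Set.Ico 0 1)] with ε hε
        simp only [Set.mem_setOf_eq, γ]
        have h1 : 0 < ε := hε.1
        have h2 : ε < 1 := hε.2
        simp only [Matrix.cons_val_zero, Matrix.cons_val_one, Matrix.head_cons]
        nlinarith [mul_nonneg (mul_nonneg (sub_nonneg.2 h2.le)
          (by linarith : (0:ℝ) ≤ 1 + ε)) (sq_nonneg ε)]
    have hmin : ∀ᶠ ε in 𝓝[>] (0:ℝ), P ![1, 0] ≤ P (γ ε) := htend.eventually h
    have hneg : ∀ᶠ ε in 𝓝[>] (0:ℝ), P (γ ε) < P ![1, 0] := by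
      filter_upwards [Ioo_mem_nhdsGT_of_mem
        (by norm_num : (0:ℝ) ∈ Set.Ico 0 (1/2))] with ε hε
      have h1 : 0 < ε := hε.1
      have h2 : ε < 1/2 := hε.2
      rw [hPval, hPval]
      simp only [γ, Matrix.cons_val_zero, Matrix.cons_val_one, Matrix.head_cons]
      nlinarith [mul_pos h1 h1, sq_nonneg (ε^2),
        mul_lt_mul_of_pos_left h2 (mul_pos h1 h1)]
    obtain ⟨ε, h1, h2⟩ := (hmin.and hneg).exists
    exact absurd h1 (not_le.mpr h2)
end

section
/- Let P^d(y,σ,τ) = -2/(y-4+2σ) - 2/(y-4+2τ) - (1/2)y² - 3y - 4σ - 4τ. For every γ ∈ (0,1), P^d(1-16γ, 1+7γ, 1+7γ) = -15/2 - 16·γ²(16γ+7)/(2γ+1) < P^d(1,1,1) = -15/2. In particular, (1,1,1) is not a local minimizer of P^d. -/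
theorem not_local_min_of_Pd
    (Pd : ℝ × ℝ × ℝ → ℝ)
    (hPd : ∀ p : ℝ × ℝ × ℝ,
      Pd p = -2 / (p.1 - 4 + 2 * p.2.1) - 2 / (p.1 - 4 + 2 * p.2.2)
        - (1 / 2 : ℝ) * p.1 ^ 2 - 3 * p.1 - 4 * p.2.1 - 4 * p.2.2) :
    Pd (1, 1, 1) = -15 / 2 ∧
    (∀ γ ∈ Set.Ioo (0 : ℝ) 1,
      Pd (1 - 16 * γ, 1 + 7 * γ, 1 + 7 * γ)
        = -15 / 2 - 16 * (γ ^ 2 * (16 * γ + 7)) / (2 * γ + 1) ∧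
      Pd (1 - 16 * γ, 1 + 7 * γ, 1 + 7 * γ) < Pd (1, 1, 1)) ∧
    ¬ IsLocalMin Pd (1, 1, 1) := by
  have h0 : Pd (1, 1, 1) = -15 / 2 := by rw [hPd]; norm_num
  have hval : ∀ γ ∈ Set.Ioo (0 : ℝ) 1,
      Pd (1 - 16 * γ, 1 + 7 * γ, 1 + 7 * γ)
        = -15 / 2 - 16 * (γ ^ 2 * (16 * γ + 7)) / (2 * γ + 1) := by
    intro γ hγ
    rw [hPd]
    have hne : (2 * γ + 1 : ℝ) ≠ 0 := by nlinarith [hγ.1]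
    have h2 : (1 - 16 * γ - 4 + 2 * (1 + 7 * γ) : ℝ) = -(2 * γ + 1) := by ring
    simp only
    rw [h2, div_neg, div_neg]
    field_simp
    ring
  have hlt : ∀ γ ∈ Set.Ioo (0 : ℝ) 1,
      Pd (1 - 16 * γ, 1 + 7 * γ, 1 + 7 * γ) < Pd (1, 1, 1) := by
    intro γ hγ
    rw [hval γ hγ, h0]
    have h1 : (0:ℝ) < 2 * γ + 1 := by linarith [hγ.1]
    have h2 : (0:ℝ) < 16 * (γ ^ 2 * (16 * γ + 7)) / (2 * γ + 1) := by
      apply div_pos _ h1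
      nlinarith [hγ.1]
    linarith
  refine ⟨h0, fun γ hγ => ⟨hval γ hγ, hlt γ hγ⟩, ?_⟩
  intro hmin
  have hc : Filter.Tendsto (fun γ : ℝ => ((1 - 16 * γ, 1 + 7 * γ, 1 + 7 * γ) : ℝ × ℝ × ℝ))
      (nhdsWithin 0 (Set.Ioo 0 1)) (nhds (1, 1, 1)) := by
    have hcont : Continuous (fun γ : ℝ => ((1 - 16 * γ, 1 + 7 * γ, 1 + 7 * γ) : ℝ × ℝ × ℝ)) := by
      fun_prop
    have h := hcont.tendsto 0
    norm_num at h
    exact h.mono_left nhdsWithin_le_nhds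
  have hev : ∀ᶠ γ in nhdsWithin (0:ℝ) (Set.Ioo 0 1),
      Pd (1, 1, 1) ≤ Pd (1 - 16 * γ, 1 + 7 * γ, 1 + 7 * γ) :=
    hc.eventually hmin
  have hne : (nhdsWithin (0:ℝ) (Set.Ioo 0 1)).NeBot := by
    exact left_nhdsWithin_Ioo_neBot (by norm_num)
  have hev2 : ∀ᶠ γ in nhdsWithin (0:ℝ) (Set.Ioo 0 1),
      Pd (1 - 16 * γ, 1 + 7 * γ, 1 + 7 * γ) < Pd (1, 1, 1) :=
    eventually_nhdsWithin_of_forall hlt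
  obtain ⟨γ, h1, h2⟩ := (hev.and hev2).exists
  linarith
end

section
/- Let Q be a symmetric n×n real matrix and f ∈ ℝⁿ. Suppose σ̄ ∈ ℝⁿ is such that Q_d(σ̄) = Q + 2Diag(σ̄) is invertible and σ̄ is a critical point of P^d(σ) = -(1/2)(f+σ)ᵀ[Q_d(σ)]⁻¹(f+σ). Then x̄ := [Q_d(σ̄)]⁻¹(f+σ̄) satisfies x̄_i ∈ {0,1} for all i. -/
/-! Differentiate along the coordinate line `σ̄ + t eᵢ`. With `M = Q_d(σ̄)`, `w = f + σ̄` and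
`x̄ = M⁻¹ w`, the rule `(M + tD)⁻¹' = -M⁻¹ D M⁻¹` and the symmetry of `M` turn the derivative of
`(w + t eᵢ)ᵀ (M + 2t Diag(eᵢ))⁻¹ (w + t eᵢ)` at `t = 0` into `2 x̄ᵢ - 2 x̄ᵢ²`. Criticality makes
it vanish, so `x̄ᵢ` is idempotent. -/

open Matrix

theorem hasDerivAt_const_add_smul {𝕜 E : Type*} [NontriviallyNormedField 𝕜]
    [NormedAddCommGroup E] [NormedSpace 𝕜 E] (w v : E) (t : 𝕜) :
    HasDerivAt (fun s : 𝕜 => w + s • v) v t := by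
  simpa using ((hasDerivAt_id' t).smul_const v).const_add w

theorem HasDerivAt.dotProduct {𝕜 m : Type*} [NontriviallyNormedField 𝕜] [Fintype m]
    {u v : 𝕜 → m → 𝕜} {u' v' : m → 𝕜} {t : 𝕜}
    (hu : HasDerivAt u u' t) (hv : HasDerivAt v v' t) :
    HasDerivAt (fun s => u s ⬝ᵥ v s) (u' ⬝ᵥ v t + u t ⬝ᵥ v') t := by
  simp only [_root_.dotProduct, ← Finset.sum_add_distrib]
  exact HasDerivAt.fun_sum fun i _ => (hasDerivAt_pi.1 hu i).mul (hasDerivAt_pi.1 hv i)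

section
variable {𝕜 : Type*} [NontriviallyNormedField 𝕜] [CompleteSpace 𝕜] {l m : Type*} [Fintype l]
  [Fintype m]

-- Any norm gives the same derivatives here: the spaces are finite-dimensional.
attribute [local instance] Matrix.linftyOpNormedAddCommGroup Matrix.linftyOpNormedSpace

theorem HasDerivAt.matrix_apply {N : 𝕜 → Matrix l m 𝕜} {N' : Matrix l m 𝕜} {t : 𝕜}
    (hN : HasDerivAt N N' t) (i : l) (j : m) : HasDerivAt (fun s => N s i j) (N' i j) t :=
  (entryLinearMap 𝕜 𝕜 i j).toContinuousLinearMap.hasFDerivAt.comp_hasDerivAt t hN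

theorem HasDerivAt.mulVec {N : 𝕜 → Matrix l m 𝕜} {N' : Matrix l m 𝕜} {u : 𝕜 → m → 𝕜}
    {u' : m → 𝕜} {t : 𝕜} (hN : HasDerivAt N N' t) (hu : HasDerivAt u u' t) :
    HasDerivAt (fun s => N s *ᵥ u s) (N' *ᵥ u t + N t *ᵥ u') t := by
  refine hasDerivAt_pi.2 fun i => ?_
  simp only [Matrix.mulVec, _root_.dotProduct, Pi.add_apply, ← Finset.sum_add_distrib]
  exact HasDerivAt.fun_sum fun j _ => (hN.matrix_apply i j).mul (hasDerivAt_pi.1 hu j)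

end

section
-- A normed-ring structure on square matrices, so that `hasFDerivAt_ringInverse` applies.
attribute [local instance] Matrix.linftyOpNormedRing Matrix.linftyOpNormedAlgebra

variable {𝕜 : Type*} [RCLike 𝕜] {m : Type*} [Fintype m] [DecidableEq m]

theorem hasDerivAt_inv_add_smul {M : Matrix m m 𝕜} (hM : IsUnit M.det) (D : Matrix m m 𝕜) :
    HasDerivAt (fun t : 𝕜 => (M + t • D)⁻¹) (-(M⁻¹ * D * M⁻¹)) 0 := by
  obtain ⟨u, rfl⟩ := (isUnit_iff_isUnit_det M).2 hM
  have hinv := (hasFDerivAt_ringInverse (𝕜 := 𝕜) u).comp_hasDerivAt_of_eq (0 : 𝕜)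
    (hasDerivAt_const_add_smul (u : Matrix m m 𝕜) D 0) (by simp)
  simp only [Function.comp_def, _root_.neg_apply, ContinuousLinearMap.mulLeftRight_apply,
    ← Ring.inverse_unit, ← nonsing_inv_eq_ringInverse] at hinv
  exact hinv

theorem hasDerivAt_dotProduct_inv_add_smul_mulVec {M : Matrix m m 𝕜} (hMs : M.IsSymm)
    (hM : IsUnit M.det) (D : Matrix m m 𝕜) (w v : m → 𝕜) :
    HasDerivAt (fun t : 𝕜 => (w + t • v) ⬝ᵥ (M + t • D)⁻¹ *ᵥ (w + t • v))
      (2 * (v ⬝ᵥ M⁻¹ *ᵥ w) - M⁻¹ *ᵥ w ⬝ᵥ D *ᵥ M⁻¹ *ᵥ w) 0 := by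
  have hline := hasDerivAt_const_add_smul w v (0 : 𝕜)
  refine (hline.dotProduct ((hasDerivAt_inv_add_smul hM D).mulVec hline)).congr_deriv ?_
  simp only [zero_smul, add_zero, dotProduct_add, neg_mulVec, dotProduct_neg, ← mulVec_mulVec]
  rw [dotProduct_mulVec w, dotProduct_mulVec w, ← mulVec_transpose, hMs.inv,
    dotProduct_comm (M⁻¹ *ᵥ w) v]
  ring

theorem hasDerivAt_dotProduct_inv_add_diagonal_single {Q : Matrix m m 𝕜} (hQ : Q.IsSymm)
    {f σ x : m → 𝕜} (hdet : IsUnit (Q + 2 • diagonal σ).det)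
    (hx : x = (Q + 2 • diagonal σ)⁻¹ *ᵥ (f + σ)) (i : m) :
    HasDerivAt (fun t : 𝕜 => (f + (σ + t • Pi.single i 1)) ⬝ᵥ
        (Q + 2 • diagonal (σ + t • Pi.single i 1))⁻¹ *ᵥ (f + (σ + t • Pi.single i 1)))
      (2 * (x i - x i ^ 2)) 0 := by
  have hsymm : (Q + 2 • diagonal σ).IsSymm := hQ.add ((isSymm_diagonal σ).smul 2)
  convert hasDerivAt_dotProduct_inv_add_smul_mulVec hsymm hdet (2 • diagonal (Pi.single i 1))
    (f + σ) (Pi.single i 1) using 2 with t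
  · have hdiag : diagonal (σ + t • Pi.single i 1) =
        diagonal σ + t • diagonal (Pi.single i 1) := by
      rw [← diagonal_smul]
      exact (diagonal_add _ _).symm
    rw [hdiag, smul_add, smul_comm (2 : ℕ) t, ← add_assoc, ← add_assoc]
  · have hdiag : (2 • diagonal (Pi.single i 1)) *ᵥ x = Pi.single i (2 * x i) := by
      ext j
      rw [← diagonal_smul, mulVec_diagonal]
      by_cases hj : j = i <;> simp [hj]
    rw [← hx, single_dotProduct, hdiag, dotProduct_single]
    ring

end

theorem critical_point_gives_binary_x
    (n : ℕ) (Q : Matrix (Fin n) (Fin n) ℝ) (hQ : Q.IsSymm) (f : Fin n → ℝ)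
    (Pd : (Fin n → ℝ) → ℝ)
    (hPd : ∀ σ, Pd σ =
      -(1 / 2 : ℝ) * ((f + σ) ⬝ᵥ (Q + 2 • Matrix.diagonal σ)⁻¹.mulVec (f + σ)))
    (σb : Fin n → ℝ) (hdet : IsUnit (Q + 2 • Matrix.diagonal σb).det)
    (hcrit : HasFDerivAt Pd (0 : (Fin n → ℝ) →L[ℝ] ℝ) σb)
    (xb : Fin n → ℝ) (hxb : xb = (Q + 2 • Matrix.diagonal σb)⁻¹.mulVec (f + σb)) :
    ∀ i, xb i = 0 ∨ xb i = 1 := by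
  intro i
  have hzero := hcrit.comp_hasDerivAt_of_eq (0 : ℝ)
    (hasDerivAt_const_add_smul σb (Pi.single i 1) 0) (by simp)
  have hslope :=
    (hasDerivAt_dotProduct_inv_add_diagonal_single hQ hdet hxb i).const_mul (-(1 / 2 : ℝ))
  simp only [Function.comp_def, hPd, _root_.zero_apply] at hzero
  have hidem : xb i * xb i = xb i := by
    linarith [hslope.unique hzero]
  exact IsIdempotentElem.iff_eq_zero_or_one.mp hidem
end

section
/- Let Q be a symmetric n×n real matrix, f ∈ ℝⁿ, and σ̄ ∈ ℝⁿ with Q_d(σ̄) = Q + 2Diag(σ̄) invertible. If x̄ := [Q_d(σ̄)]⁻¹(f+σ̄) satisfies x̄_i ∈ {0,1} for all i, then P(x̄) = P^d(σ̄), where P(x) = (1/2)xᵀQx - fᵀx and P^d(σ) = -(1/2)(f+σ)ᵀ[Q_d(σ)]⁻¹(f+σ). -/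
open Matrix

theorem primal_equals_dual_value
    (n : ℕ) (Q : Matrix (Fin n) (Fin n) ℝ) (hQ : Q.IsSymm) (f : Fin n → ℝ)
    (P : (Fin n → ℝ) → ℝ)
    (hP : ∀ x, P x = (1 / 2 : ℝ) * (x ⬝ᵥ Q.mulVec x) - f ⬝ᵥ x)
    (Pd : (Fin n → ℝ) → ℝ)
    (hPd : ∀ σ, Pd σ =
      -(1 / 2 : ℝ) * ((f + σ) ⬝ᵥ (Q + 2 • Matrix.diagonal σ)⁻¹.mulVec (f + σ)))
    (σb : Fin n → ℝ) (hdet : IsUnit (Q + 2 • Matrix.diagonal σb).det)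
    (xb : Fin n → ℝ) (hxb : xb = (Q + 2 • Matrix.diagonal σb)⁻¹.mulVec (f + σb))
    (hbin : ∀ i, xb i = 0 ∨ xb i = 1) :
    P xb = Pd σb := by
  set A := Q + 2 • Matrix.diagonal σb with hA
  have hAsymm : A.IsSymm := by
    rw [hA, Matrix.IsSymm]
    rw [Matrix.transpose_add, Matrix.transpose_smul, Matrix.diagonal_transpose, hQ]
  have hAx : A.mulVec xb = f + σb := by
    rw [hxb, Matrix.mulVec_mulVec, Matrix.mul_nonsing_inv _ hdet, Matrix.one_mulVec]
  -- (f+σb) ⬝ᵥ xb = xb ⬝ᵥ A.mulVec xb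
  have hsym : (f + σb) ⬝ᵥ xb = xb ⬝ᵥ A.mulVec xb := by
    rw [← hAx, Matrix.dotProduct_mulVec, ← Matrix.mulVec_transpose, hAsymm]
  have hdiag : xb ⬝ᵥ (Matrix.diagonal σb).mulVec xb = σb ⬝ᵥ xb := by
    simp only [Matrix.mulVec_diagonal, dotProduct]
    apply Finset.sum_congr rfl
    intro i _
    rcases hbin i with h | h <;> simp [h] <;> ring
  have hexp : xb ⬝ᵥ A.mulVec xb = xb ⬝ᵥ Q.mulVec xb + 2 * (σb ⬝ᵥ xb) := by
    rw [hA, Matrix.add_mulVec, dotProduct_add, Matrix.smul_mulVec,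
      dotProduct_smul, hdiag]
    push_cast
    ring
  have hf : f ⬝ᵥ xb = xb ⬝ᵥ Q.mulVec xb + σb ⬝ᵥ xb := by
    have : (f + σb) ⬝ᵥ xb = f ⬝ᵥ xb + σb ⬝ᵥ xb := by
      rw [add_dotProduct]
    rw [this, hexp] at hsym
    linarith
  have hPdval : (f + σb) ⬝ᵥ A⁻¹.mulVec (f + σb) = xb ⬝ᵥ Q.mulVec xb + 2 * (σb ⬝ᵥ xb) := by
    rw [← hxb, hsym, hexp]
  rw [hP, hPd, ← hA, hPdval, hf]
  ring
end

section
/- Let Q be a symmetric n×n real matrix, f ∈ ℝⁿ. The function P^d(σ) = -(1/2)(f+σ)ᵀ[Q_d(σ)]⁻¹(f+σ) is concave on the open convex set S⁺ = {σ ∈ ℝⁿ : σ > 0 componentwise and Q_d(σ) = Q + 2Diag(σ) is positive definite}. -/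
/-!
The matrix fractional function `(x, A) ↦ xᵀA⁻¹x` is jointly convex on `ℝⁿ × {A ≻ 0}`: completing
the square, `xᵀA⁻¹x - (2 zᵀx - zᵀAz) = (A⁻¹x - z)ᵀA(A⁻¹x - z) ≥ 0` with equality at `z = A⁻¹x`,
so it is the pointwise supremum over `z` of `2 zᵀx - zᵀAz`, which is affine in `(x, A)`.
`P^d` is `-1/2` times its composition with the affine map `σ ↦ (f + σ, Q + 2 Diag σ)`.
-/

open Matrix

namespace Matrix

theorem convex_setOf_posDef {ι : Type*} :
    Convex ℝ {p : (ι → ℝ) × Matrix ι ι ℝ | p.2.PosDef} :=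
  convex_iff_forall_pos.2 fun _ hp _ hq _ _ ha hb _ => (hp.smul ha).add (hq.smul hb)

variable {ι : Type*} [Fintype ι] [DecidableEq ι]

theorem dotProduct_inv_mulVec_sub_eq {A : Matrix ι ι ℝ} (hA : A.IsSymm) (hdet : IsUnit A.det)
    (x z : ι → ℝ) :
    x ⬝ᵥ A⁻¹ *ᵥ x - (2 * (z ⬝ᵥ x) - z ⬝ᵥ A *ᵥ z) =
      (A⁻¹ *ᵥ x - z) ⬝ᵥ A *ᵥ (A⁻¹ *ᵥ x - z) := by
  set v := A⁻¹ *ᵥ x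
  have hAv : A *ᵥ v = x := by rw [mulVec_mulVec, mul_nonsing_inv A hdet, one_mulVec]
  have hvAz : v ⬝ᵥ A *ᵥ z = z ⬝ᵥ x := by
    rw [dotProduct_mulVec, ← mulVec_transpose, hA.eq, hAv, dotProduct_comm]
  rw [mulVec_sub, hAv, dotProduct_sub, sub_dotProduct, sub_dotProduct, hvAz,
    dotProduct_comm v x, dotProduct_comm z x]
  ring

theorem PosDef.two_mul_dotProduct_sub_le {A : Matrix ι ι ℝ} (hA : A.PosDef) (x z : ι → ℝ) :
    2 * (z ⬝ᵥ x) - z ⬝ᵥ A *ᵥ z ≤ x ⬝ᵥ A⁻¹ *ᵥ x := by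
  have hsq := dotProduct_inv_mulVec_sub_eq (isHermitian_iff_isSymm.1 hA.isHermitian)
    ((isUnit_iff_isUnit_det A).1 hA.isUnit) x z
  have hnonneg := hA.posSemidef.dotProduct_mulVec_nonneg (A⁻¹ *ᵥ x - z)
  rw [star_trivial] at hnonneg
  linarith

theorem PosDef.dotProduct_inv_mulVec_eq {A : Matrix ι ι ℝ} (hA : A.PosDef) (x : ι → ℝ) :
    x ⬝ᵥ A⁻¹ *ᵥ x = 2 * ((A⁻¹ *ᵥ x) ⬝ᵥ x) - (A⁻¹ *ᵥ x) ⬝ᵥ A *ᵥ (A⁻¹ *ᵥ x) := by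
  have hsq := dotProduct_inv_mulVec_sub_eq (isHermitian_iff_isSymm.1 hA.isHermitian)
    ((isUnit_iff_isUnit_det A).1 hA.isUnit) x (A⁻¹ *ᵥ x)
  rw [sub_self, zero_dotProduct] at hsq
  linarith

theorem convexOn_dotProduct_inv_mulVec :
    ConvexOn ℝ {p : (ι → ℝ) × Matrix ι ι ℝ | p.2.PosDef} fun p => p.1 ⬝ᵥ p.2⁻¹ *ᵥ p.1 := by
  refine ⟨convex_setOf_posDef, fun p hp q hq a b ha hb hab => ?_⟩
  set r := a • p + b • q
  have hr : r.2.PosDef := convex_setOf_posDef hp hq ha hb hab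
  set z := r.2⁻¹ *ᵥ r.1
  calc r.1 ⬝ᵥ r.2⁻¹ *ᵥ r.1 = 2 * (z ⬝ᵥ r.1) - z ⬝ᵥ r.2 *ᵥ z := hr.dotProduct_inv_mulVec_eq _
    _ = a * (2 * (z ⬝ᵥ p.1) - z ⬝ᵥ p.2 *ᵥ z) + b * (2 * (z ⬝ᵥ q.1) - z ⬝ᵥ q.2 *ᵥ z) := by
      simp only [r, Prod.fst_add, Prod.snd_add, Prod.smul_fst, Prod.smul_snd, add_mulVec,
        smul_mulVec, dotProduct_add, dotProduct_smul, smul_eq_mul]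
      ring
    _ ≤ a * (p.1 ⬝ᵥ p.2⁻¹ *ᵥ p.1) + b * (q.1 ⬝ᵥ q.2⁻¹ *ᵥ q.1) := by
      gcongr
      exacts [hp.two_mul_dotProduct_sub_le _ _, hq.two_mul_dotProduct_sub_le _ _]

end Matrix

def shiftDiagonalAffineMap {ι R : Type*} [DecidableEq ι] [CommRing R] (f : ι → R)
    (Q : Matrix ι ι R) : (ι → R) →ᵃ[R] (ι → R) × Matrix ι ι R where
  toFun σ := (f + σ, Q + 2 • diagonal σ)
  linear := LinearMap.id.prod (2 • diagonalLinearMap ι R R)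
  map_vadd' σ v := Prod.ext (add_left_comm f v σ) <| by
    change Q + 2 • diagonal (v + σ) = 2 • diagonal v + (Q + 2 • diagonal σ)
    rw [show v + σ = fun i => v i + σ i from rfl, ← diagonal_add, smul_add]
    abel

theorem Pd_concave_on_Splus_general
    (n : ℕ) (Q : Matrix (Fin n) (Fin n) ℝ) (f : Fin n → ℝ)
    (Pd : (Fin n → ℝ) → ℝ)
    (hPd : ∀ σ, Pd σ =
      -(1 / 2 : ℝ) * ((f + σ) ⬝ᵥ (Q + 2 • Matrix.diagonal σ)⁻¹.mulVec (f + σ))) :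
    ConcaveOn ℝ
      {σ : Fin n → ℝ | (∀ i, 0 < σ i) ∧ (Q + 2 • Matrix.diagonal σ).PosDef} Pd := by
  set g := shiftDiagonalAffineMap f Q
  have hpos : Convex ℝ {σ : Fin n → ℝ | ∀ i, 0 < σ i} := by
    simpa [Set.pi] using convex_pi (s := Set.univ) fun (_ : Fin n) _ => convex_Ioi (0 : ℝ)
  have hS := hpos.inter (convex_setOf_posDef.affine_preimage g)
  have hPd_eq : Pd = (1 / 2 : ℝ) • -((fun p => p.1 ⬝ᵥ p.2⁻¹ *ᵥ p.1) ∘ g) := by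
    ext σ
    rw [hPd]
    change _ = 1 / 2 * -((f + σ) ⬝ᵥ (Q + 2 • diagonal σ)⁻¹ *ᵥ (f + σ))
    ring
  rw [hPd_eq]
  exact (neg_concaveOn_iff.2 ((convexOn_dotProduct_inv_mulVec.comp_affineMap g).subset
    (fun σ hσ => hσ.2) hS)).smul (by norm_num)

theorem Pd_concave_on_Splus
    (n : ℕ) (Q : Matrix (Fin n) (Fin n) ℝ) (hQ : Q.IsSymm) (f : Fin n → ℝ)
    (Pd : (Fin n → ℝ) → ℝ)
    (hPd : ∀ σ, Pd σ =
      -(1 / 2 : ℝ) * ((f + σ) ⬝ᵥ (Q + 2 • Matrix.diagonal σ)⁻¹.mulVec (f + σ))) :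
    ConcaveOn ℝ
      {σ : Fin n → ℝ | (∀ i, 0 < σ i) ∧ (Q + 2 • Matrix.diagonal σ).PosDef} Pd :=
  Pd_concave_on_Splus_general n Q f Pd hPd
end

section
/- Let Q be a symmetric n×n real matrix, f ∈ ℝⁿ. The function P^d(σ) = -(1/2)(f+σ)ᵀ[Q_d(σ)]⁻¹(f+σ) is convex on the open convex set S⁻ = {σ ∈ ℝⁿ : σ > 0 componentwise and Q_d(σ) = Q + 2Diag(σ) is negative definite}. -/
/-!
On `S⁻` the matrix `-Q_d(σ)` is positive definite and
`P^d(σ) = ½ (f + σ)ᵀ (-Q_d(σ))⁻¹ (f + σ)`, i.e. `P^d` is half the matrix-fractional function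
`(x, B) ↦ xᵀ B⁻¹ x` composed with the affine map `σ ↦ (f + σ, -Q_d(σ))`. The matrix-fractional
function is jointly convex on `ℝⁿ × {B ≻ 0}`: by completing the square it is the pointwise
supremum over `z` of `2 xᵀz - zᵀBz`, which is linear in `(x, B)`.
-/

open Matrix

namespace Matrix

variable {ι : Type*} [Fintype ι] [DecidableEq ι]

lemma inv_neg_of_isUnit_det {α : Type*} [CommRing α] {A : Matrix ι ι α} (hA : IsUnit A.det) :
    (-A)⁻¹ = -A⁻¹ := by
  simpa using inv_smul' A (-1) hA

omit [Fintype ι] [DecidableEq ι] in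
lemma convex_setOf_posDef_s12 : Convex ℝ {B : Matrix ι ι ℝ | B.PosDef} :=
  convex_iff_forall_pos.2 fun _ hA _ hB _ _ ha hb _ => (hA.smul ha).add (hB.smul hb)

theorem PosDef.isGreatest_two_dotProduct_sub {B : Matrix ι ι ℝ} (hB : B.PosDef) (x : ι → ℝ) :
    IsGreatest (Set.range fun z => 2 * (x ⬝ᵥ z) - z ⬝ᵥ B *ᵥ z) (x ⬝ᵥ B⁻¹ *ᵥ x) := by
  set u := B⁻¹ *ᵥ x
  have hBu : B *ᵥ u = x := by
    rw [mulVec_mulVec, mul_nonsing_inv _ hB.det_pos.ne'.isUnit, one_mulVec]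
  have huB : u ᵥ* B = x := by
    rw [← mulVec_transpose, ← conjTranspose_eq_transpose_of_trivial, hB.isHermitian, hBu]
  refine ⟨⟨u, ?_⟩, ?_⟩
  · simp only [hBu, dotProduct_comm u x]; ring
  · rintro _ ⟨z, rfl⟩
    have hsq : 0 ≤ (z - u) ⬝ᵥ B *ᵥ (z - u) := by
      simpa using hB.posSemidef.dotProduct_mulVec_nonneg (z - u)
    have hexp : (z - u) ⬝ᵥ B *ᵥ (z - u) = z ⬝ᵥ B *ᵥ z - 2 * (x ⬝ᵥ z) + x ⬝ᵥ u := by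
      rw [mulVec_sub, dotProduct_sub, sub_dotProduct, sub_dotProduct, hBu, dotProduct_mulVec u,
        huB, dotProduct_comm z x, dotProduct_comm u x]
      ring
    dsimp only
    linarith

end Matrix

def dualAffineMap {ι : Type*} [DecidableEq ι] (Q : Matrix ι ι ℝ) (f : ι → ℝ) :
    (ι → ℝ) →ᵃ[ℝ] (ι → ℝ) × Matrix ι ι ℝ where
  toFun σ := (f + σ, -(Q + 2 • diagonal σ))
  linear := LinearMap.id.prod (-(2 • diagonalLinearMap ι ℝ ℝ))
  map_vadd' σ v := by
    refine Prod.ext ?_ ?_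
    · show f + (v + σ) = v + (f + σ)
      abel
    · show -(Q + 2 • diagonal (v + σ)) = -(2 • diagonal v) + -(Q + 2 • diagonal σ)
      rw [show diagonal (v + σ) = diagonal v + diagonal σ from (diagonal_add v σ).symm, smul_add]
      abel

theorem Pd_convex_on_Sminus_general
    (n : ℕ) (Q : Matrix (Fin n) (Fin n) ℝ) (f : Fin n → ℝ)
    (Pd : (Fin n → ℝ) → ℝ)
    (hPd : ∀ σ, Pd σ =
      -(1 / 2 : ℝ) * ((f + σ) ⬝ᵥ (Q + 2 • Matrix.diagonal σ)⁻¹.mulVec (f + σ))) :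
    ConvexOn ℝ
      {σ : Fin n → ℝ | (∀ i, 0 < σ i) ∧ (-(Q + 2 • Matrix.diagonal σ)).PosDef} Pd := by
  have hfrac := convexOn_dotProduct_inv_mulVec.comp_affineMap (dualAffineMap Q f)
  have horthant : Convex ℝ {σ : Fin n → ℝ | ∀ i, 0 < σ i} := by
    simpa [Set.pi] using convex_pi (s := Set.univ) fun i _ => convex_Ioi (0 : ℝ)
  refine ((hfrac.subset (fun _ hσ => hσ.2) (horthant.inter hfrac.1)).smul
    (c := (1 / 2 : ℝ)) (by norm_num)).congr fun σ hσ => ?_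
  have hdet : IsUnit (-(Q + 2 • diagonal σ)).det := hσ.2.det_pos.ne'.isUnit
  show (1 / 2 : ℝ) * ((f + σ) ⬝ᵥ (-(Q + 2 • diagonal σ))⁻¹ *ᵥ (f + σ)) = Pd σ
  rw [hPd, ← neg_neg (Q + _), inv_neg_of_isUnit_det hdet, neg_neg, neg_mulVec, dotProduct_neg]
  ring

theorem Pd_convex_on_Sminus
    (n : ℕ) (Q : Matrix (Fin n) (Fin n) ℝ) (hQ : Q.IsSymm) (f : Fin n → ℝ)
    (Pd : (Fin n → ℝ) → ℝ)
    (hPd : ∀ σ, Pd σ =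
      -(1 / 2 : ℝ) * ((f + σ) ⬝ᵥ (Q + 2 • Matrix.diagonal σ)⁻¹.mulVec (f + σ))) :
    ConvexOn ℝ
      {σ : Fin n → ℝ | (∀ i, 0 < σ i) ∧ (-(Q + 2 • Matrix.diagonal σ)).PosDef} Pd :=
  Pd_convex_on_Sminus_general n Q f Pd hPd
end

section
/- Let Q be a symmetric n×n real matrix, f ∈ ℝⁿ, and suppose σ̄ ∈ S⁺ = {σ > 0 : Q + 2Diag(σ) positive definite} is a critical point of P^d(σ) = -(1/2)(f+σ)ᵀ[Q+2Diag(σ)]⁻¹(f+σ), and set x̄ = [Q+2Diag(σ̄)]⁻¹(f+σ̄). Then x̄ is a global minimizer of P(x) = (1/2)xᵀQx - fᵀx over the cube [0,1]ⁿ, and σ̄ is a global maximizer of P^d over S⁺, with P(x̄) = P^d(σ̄). -/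
/-!
For `Q + 2 Diag σ` positive definite, `P^d(σ)` is the minimum over `x` of the Lagrangian
`Ξ(x, σ) = P(x) + σ ⬝ (x ∘ x - x) = ½ xᵀ(Q + 2 Diag σ)x - (f + σ)ᵀx`, attained at
`x(σ) = (Q + 2 Diag σ)⁻¹(f + σ)`. Positive definiteness is an open condition, so near `σ̄` the
function `P^d` lies below `Ξ(x̄, ·)`, which is affine with slope `x̄ ∘ x̄ - x̄` and agrees with
`P^d` at `σ̄`; criticality of `σ̄` therefore forces `x̄ ∘ x̄ = x̄`. Then `Ξ(x̄, σ) = P(x̄)` for all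
`σ`, whence `P^d(σ) ≤ P(x̄) = P^d(σ̄) ≤ Ξ(x, σ̄) ≤ P(x)` for `σ ∈ S⁺` and `x` in the cube.
-/

open Matrix Filter Topology

noncomputable def quadObj {ι : Type*} [Fintype ι] (M : Matrix ι ι ℝ) (b x : ι → ℝ) : ℝ :=
  (1 / 2 : ℝ) * (x ⬝ᵥ M *ᵥ x) - b ⬝ᵥ x

theorem mem_Icc_zero_one_of_mul_self_eq {ι : Type*} {x : ι → ℝ} (h : x * x = x) :
    x ∈ Set.Icc 0 1 := by
  refine ⟨fun i => ?_, fun i => ?_⟩ <;>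
  · have hi : x i * x i = x i := congr_fun h i
    simp only [Pi.zero_apply, Pi.one_apply]
    nlinarith [mul_self_nonneg (x i)]

section Quadratic

variable {ι : Type*} [Fintype ι]

theorem quadObj_of_mulVec_eq {M : Matrix ι ι ℝ} {b z : ι → ℝ} (hz : M *ᵥ z = b) :
    quadObj M b z = -(1 / 2 : ℝ) * (b ⬝ᵥ z) := by
  rw [quadObj, hz, dotProduct_comm]
  ring

theorem quadObj_eq_add_of_mulVec_eq {M : Matrix ι ι ℝ} (hM : M.IsSymm) {b z : ι → ℝ}
    (hz : M *ᵥ z = b) (x : ι → ℝ) :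
    quadObj M b x = quadObj M b z + (1 / 2 : ℝ) * ((x - z) ⬝ᵥ M *ᵥ (x - z)) := by
  have hzx : z ⬝ᵥ M *ᵥ x = b ⬝ᵥ x := by
    rw [dotProduct_mulVec, ← hM.eq, vecMul_transpose, hz, dotProduct_comm]
  simp only [quadObj, mulVec_sub, dotProduct_sub, sub_dotProduct, hz, hzx, dotProduct_comm x b,
    dotProduct_comm z b]
  ring

theorem quadObj_le_of_mulVec_eq {M : Matrix ι ι ℝ} (hM : M.PosSemidef) {b z : ι → ℝ}
    (hz : M *ᵥ z = b) (x : ι → ℝ) : quadObj M b z ≤ quadObj M b x := by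
  rw [quadObj_eq_add_of_mulVec_eq (isHermitian_iff_isSymm.mp hM.isHermitian) hz x]
  have := hM.dotProduct_mulVec_nonneg (x - z)
  simp only [star_trivial] at this
  linarith

theorem dotProduct_mul_self_sub_nonpos {σ x : ι → ℝ} (hσ : 0 ≤ σ) (hx : x ∈ Set.Icc 0 1) :
    σ ⬝ᵥ (x * x - x) ≤ 0 :=
  Finset.sum_nonpos fun i _ => mul_nonpos_of_nonneg_of_nonpos (hσ i) <| by
    have h0 : 0 ≤ x i := hx.1 i
    have h1 : x i ≤ 1 := hx.2 i
    simp only [Pi.sub_apply, Pi.mul_apply]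
    nlinarith

variable [DecidableEq ι]

theorem quadObj_add_two_smul_diagonal (M : Matrix ι ι ℝ) (b σ x : ι → ℝ) :
    quadObj (M + 2 • diagonal σ) (b + σ) x = quadObj M b x + σ ⬝ᵥ (x * x - x) := by
  have hdiag : x ⬝ᵥ (2 • diagonal σ) *ᵥ x = 2 * (σ ⬝ᵥ (x * x)) := by
    rw [← diagonal_smul]
    simp only [dotProduct, mulVec_diagonal, Finset.mul_sum, Pi.mul_apply, two_nsmul,
      Pi.add_apply]
    exact Finset.sum_congr rfl fun i _ => by ring
  rw [quadObj, quadObj, add_mulVec, dotProduct_add, add_dotProduct, hdiag, dotProduct_sub]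
  ring

theorem Matrix.mulVec_inv_mulVec {R : Type*} [CommRing R] {A : Matrix ι ι R}
    (hA : IsUnit A.det) (b : ι → R) : A *ᵥ (A⁻¹ *ᵥ b) = b := by
  rw [mulVec_mulVec, mul_nonsing_inv A hA, one_mulVec]

end Quadratic

namespace Matrix.PosDef

variable {ι : Type*} [Fintype ι] [DecidableEq ι] {A : Matrix ι ι ℝ}

theorem sq_le_inv_mul_dotProduct_mulVec (hA : A.PosDef) (x : ι → ℝ) (k : ι) :
    x k ^ 2 ≤ A⁻¹ k k * (x ⬝ᵥ A *ᵥ x) := by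
  have hw : 0 < A⁻¹ k k := hA.inv.diag_pos
  -- compare `x` with the minimiser of `½ yᵀAy - s y_k`, for the optimal `s`
  set s := x k / A⁻¹ k k
  have hz := mulVec_inv_mulVec ((isUnit_iff_isUnit_det A).mp hA.isUnit) (s • Pi.single k 1)
  have key := quadObj_le_of_mulVec_eq hA.posSemidef hz x
  rw [quadObj_of_mulVec_eq hz, quadObj] at key
  simp only [mulVec_smul, smul_dotProduct, dotProduct_smul, mulVec_single_one, single_dotProduct,
    smul_eq_mul, one_mul, col_apply] at key
  have hxk : x k = s * A⁻¹ k k := (div_mul_cancel₀ _ hw.ne').symm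
  rw [hxk] at key ⊢
  nlinarith

theorem sum_sq_le_trace_inv_mul (hA : A.PosDef) (x : ι → ℝ) :
    ∑ i, x i ^ 2 ≤ A⁻¹.trace * (x ⬝ᵥ A *ᵥ x) := by
  rw [trace, Finset.sum_mul]
  exact Finset.sum_le_sum fun i _ => hA.sq_le_inv_mul_dotProduct_mulVec x i

theorem eventually_add_diagonal (hA : A.PosDef) :
    ∀ᶠ d in 𝓝 (0 : ι → ℝ), (A + diagonal d).PosDef := by
  set c := A⁻¹.trace
  have hc : 0 ≤ c := hA.inv.posSemidef.trace_nonneg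
  filter_upwards [Metric.ball_mem_nhds (0 : ι → ℝ) (by positivity : (0 : ℝ) < 1 / (c + 1))]
    with d hd
  rw [mem_ball_zero_iff, lt_div_iff₀ (by positivity)] at hd
  refine of_dotProduct_mulVec_pos (hA.isHermitian.add (isHermitian_diagonal d)) fun x hx => ?_
  have hq := hA.dotProduct_mulVec_pos hx
  simp only [star_trivial] at hq ⊢
  have hdiag : -(‖d‖ * ∑ i, x i ^ 2) ≤ x ⬝ᵥ diagonal d *ᵥ x := by
    simp only [dotProduct, mulVec_diagonal, Finset.mul_sum, ← Finset.sum_neg_distrib]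
    refine Finset.sum_le_sum fun i _ => ?_
    have hdi : |d i| ≤ ‖d‖ := by simpa only [Real.norm_eq_abs] using norm_le_pi_norm d i
    nlinarith [neg_abs_le (d i), sq_nonneg (x i)]
  have hsum := hA.sum_sq_le_trace_inv_mul x
  rw [add_mulVec, dotProduct_add]
  nlinarith [norm_nonneg d]

end Matrix.PosDef

section Dual

variable {ι : Type*} [Fintype ι] [DecidableEq ι]

noncomputable def dualObj (Q : Matrix ι ι ℝ) (f σ : ι → ℝ) : ℝ :=
  -(1 / 2 : ℝ) * ((f + σ) ⬝ᵥ (Q + 2 • diagonal σ)⁻¹ *ᵥ (f + σ))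

variable {Q : Matrix ι ι ℝ} {f σ : ι → ℝ}

theorem dualObj_eq_quadObj_of_mulVec_eq (hσ : IsUnit (Q + 2 • diagonal σ).det) {x : ι → ℝ}
    (hx : (Q + 2 • diagonal σ) *ᵥ x = f + σ) :
    dualObj Q f σ = quadObj (Q + 2 • diagonal σ) (f + σ) x := by
  have : (Q + 2 • diagonal σ)⁻¹ *ᵥ (f + σ) = x := by
    rw [← hx, mulVec_mulVec, nonsing_inv_mul _ hσ, one_mulVec]
  rw [dualObj, this, quadObj_of_mulVec_eq hx]

theorem dualObj_le_quadObj_add (hσ : (Q + 2 • diagonal σ).PosDef) (x : ι → ℝ) :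
    dualObj Q f σ ≤ quadObj Q f x + σ ⬝ᵥ (x * x - x) := by
  have hdet := (isUnit_iff_isUnit_det _).mp hσ.isUnit
  have hsol := mulVec_inv_mulVec hdet (f + σ)
  rw [dualObj_eq_quadObj_of_mulVec_eq hdet hsol, ← quadObj_add_two_smul_diagonal]
  exact quadObj_le_of_mulVec_eq hσ.posSemidef hsol x

theorem eventually_posDef_add_two_smul_diagonal (hσ : (Q + 2 • diagonal σ).PosDef) :
    ∀ᶠ τ in 𝓝 σ, (Q + 2 • diagonal τ).PosDef := by
  have hlim : Tendsto (fun τ => 2 • (τ - σ)) (𝓝 σ) (𝓝 0) :=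
    (by fun_prop : Continuous fun τ : ι → ℝ => 2 • (τ - σ)).tendsto' σ 0 (by simp)
  filter_upwards [hlim.eventually hσ.eventually_add_diagonal] with τ hτ
  rw [add_assoc, ← diagonal_smul, diagonal_add] at hτ
  convert hτ using 2
  rw [← diagonal_smul]
  congr 1
  ext i
  simp only [Pi.smul_apply, Pi.sub_apply, smul_sub, add_sub_cancel]

theorem mul_self_eq_of_hasFDerivAt_dualObj (hσ : (Q + 2 • diagonal σ).PosDef)
    (hcrit : HasFDerivAt (dualObj Q f) (0 : (ι → ℝ) →L[ℝ] ℝ) σ) {x : ι → ℝ}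
    (hx : (Q + 2 • diagonal σ) *ᵥ x = f + σ) : x * x = x := by
  set g := x * x - x with hg
  have hdet := (isUnit_iff_isUnit_det _).mp hσ.isUnit
  have hbound : ∀ᶠ τ in 𝓝 σ, dualObj Q f τ ≤ dualObj Q f σ + g ⬝ᵥ (τ - σ) := by
    filter_upwards [eventually_posDef_add_two_smul_diagonal hσ] with τ hτ
    calc dualObj Q f τ ≤ quadObj Q f x + τ ⬝ᵥ g := dualObj_le_quadObj_add hτ x
      _ = dualObj Q f σ + g ⬝ᵥ (τ - σ) := by
        rw [dualObj_eq_quadObj_of_mulVec_eq hdet hx, quadObj_add_two_smul_diagonal,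
          ← hg, dotProduct_comm g, sub_dotProduct]
        ring
  set L : (ι → ℝ) →L[ℝ] ℝ := LinearMap.toContinuousLinearMap (dotProductEquiv ℝ ι g)
  have hmax : IsLocalMax (fun τ => dualObj Q f τ - L τ) σ := by
    filter_upwards [hbound] with τ hτ
    simp only [L, LinearMap.coe_toContinuousLinearMap', dotProductEquiv_apply_apply,
      dotProduct_sub] at hτ ⊢
    linarith
  have hL : L = 0 := by
    simpa using hmax.hasFDerivAt_eq_zero (hcrit.sub L.hasFDerivAt)
  funext k
  have hk := congr($hL (Pi.single k 1))
  simp only [L, LinearMap.coe_toContinuousLinearMap', dotProductEquiv_apply_apply,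
    dotProduct_single, mul_one, _root_.zero_apply, g, Pi.sub_apply] at hk
  exact sub_eq_zero.mp hk

end Dual

theorem global_min_case_Splus_general
    (n : ℕ) (Q : Matrix (Fin n) (Fin n) ℝ) (f : Fin n → ℝ)
    (P : (Fin n → ℝ) → ℝ)
    (hP : ∀ x, P x = (1 / 2 : ℝ) * (x ⬝ᵥ Q.mulVec x) - f ⬝ᵥ x)
    (Pd : (Fin n → ℝ) → ℝ)
    (hPd : ∀ σ, Pd σ =
      -(1 / 2 : ℝ) * ((f + σ) ⬝ᵥ (Q + 2 • Matrix.diagonal σ)⁻¹.mulVec (f + σ)))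
    (σb : Fin n → ℝ)
    (hσb : (∀ i, 0 < σb i) ∧ (Q + 2 • Matrix.diagonal σb).PosDef)
    (hcrit : HasFDerivAt Pd (0 : (Fin n → ℝ) →L[ℝ] ℝ) σb)
    (xb : Fin n → ℝ) (hxb : xb = (Q + 2 • Matrix.diagonal σb)⁻¹.mulVec (f + σb)) :
    xb ∈ Set.Icc (0 : Fin n → ℝ) 1 ∧
    (∀ x ∈ Set.Icc (0 : Fin n → ℝ) 1, P xb ≤ P x) ∧
    (∀ σ : Fin n → ℝ, (∀ i, 0 < σ i) → (Q + 2 • Matrix.diagonal σ).PosDef →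
      Pd σ ≤ Pd σb) ∧
    P xb = Pd σb := by
  obtain ⟨hσb_pos, hpd⟩ := hσb
  obtain rfl : P = quadObj Q f := funext hP
  obtain rfl : Pd = dualObj Q f := funext hPd
  have hdet := (isUnit_iff_isUnit_det _).mp hpd.isUnit
  have hsol : (Q + 2 • diagonal σb) *ᵥ xb = f + σb := hxb ▸ mulVec_inv_mulVec hdet _
  have hbin : xb * xb = xb := mul_self_eq_of_hasFDerivAt_dualObj hpd hcrit hsol
  have hgap : quadObj Q f xb = dualObj Q f σb := by
    rw [dualObj_eq_quadObj_of_mulVec_eq hdet hsol, quadObj_add_two_smul_diagonal, hbin, sub_self,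
      dotProduct_zero, add_zero]
  refine ⟨mem_Icc_zero_one_of_mul_self_eq hbin, fun x hx => ?_, fun σ _ hσ => ?_, hgap⟩
  · linarith [dualObj_le_quadObj_add (f := f) hpd x,
      dotProduct_mul_self_sub_nonpos (fun i => (hσb_pos i).le) hx]
  · calc dualObj Q f σ ≤ quadObj Q f xb + σ ⬝ᵥ (xb * xb - xb) := dualObj_le_quadObj_add hσ xb
      _ = dualObj Q f σb := by rw [hbin, sub_self, dotProduct_zero, add_zero, hgap]

theorem global_min_case_Splus
    (n : ℕ) (Q : Matrix (Fin n) (Fin n) ℝ) (hQ : Q.IsSymm) (f : Fin n → ℝ)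
    (P : (Fin n → ℝ) → ℝ)
    (hP : ∀ x, P x = (1 / 2 : ℝ) * (x ⬝ᵥ Q.mulVec x) - f ⬝ᵥ x)
    (Pd : (Fin n → ℝ) → ℝ)
    (hPd : ∀ σ, Pd σ =
      -(1 / 2 : ℝ) * ((f + σ) ⬝ᵥ (Q + 2 • Matrix.diagonal σ)⁻¹.mulVec (f + σ)))
    (σb : Fin n → ℝ)
    (hσb : (∀ i, 0 < σb i) ∧ (Q + 2 • Matrix.diagonal σb).PosDef)
    (hcrit : HasFDerivAt Pd (0 : (Fin n → ℝ) →L[ℝ] ℝ) σb)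
    (xb : Fin n → ℝ) (hxb : xb = (Q + 2 • Matrix.diagonal σb)⁻¹.mulVec (f + σb)) :
    xb ∈ Set.Icc (0 : Fin n → ℝ) 1 ∧
    (∀ x ∈ Set.Icc (0 : Fin n → ℝ) 1, P xb ≤ P x) ∧
    (∀ σ : Fin n → ℝ, (∀ i, 0 < σ i) → (Q + 2 • Matrix.diagonal σ).PosDef →
      Pd σ ≤ Pd σb) ∧
    P xb = Pd σb :=
  global_min_case_Splus_general n Q f P hP Pd hPd σb hσb hcrit xb hxb
end

section
/- Let Q be a symmetric n×n real matrix with entries q_{ij}, f ∈ ℝⁿ, σ̄ ∈ ℝⁿ with σ̄_i > 0 for all i, Q + 2Diag(σ̄) invertible, and x̄ = [Q+2Diag(σ̄)]⁻¹(f+σ̄) with x̄_i ∈ {0,1} for all i. Then x̄ is a local minimizer of P(x) = (1/2)xᵀQx - fᵀx on the cube [0,1]ⁿ: specifically, for any ε > 0 with min_k σ̄_k ≥ (n/2)·ε·max_{i,j}|q_{ij}|, one has P(x) ≥ P(x̄) for every x ∈ [0,1]ⁿ with |x_i - x̄_i| ≤ ε for all i. -/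
open Matrix

theorem local_min_on_cube
    (n : ℕ) (Q : Matrix (Fin n) (Fin n) ℝ) (hQ : Q.IsSymm) (f : Fin n → ℝ)
    (P : (Fin n → ℝ) → ℝ)
    (hP : ∀ x, P x = (1 / 2 : ℝ) * (x ⬝ᵥ Q.mulVec x) - f ⬝ᵥ x)
    (σb : Fin n → ℝ) (hσpos : ∀ i, 0 < σb i)
    (hdet : IsUnit (Q + 2 • Matrix.diagonal σb).det)
    (xb : Fin n → ℝ) (hxb : xb = (Q + 2 • Matrix.diagonal σb)⁻¹.mulVec (f + σb))
    (hbin : ∀ i, xb i = 0 ∨ xb i = 1)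
    (ε : ℝ) (hε : 0 < ε)
    (hsmall : ∀ k i j, (n / 2 : ℝ) * ε * |Q i j| ≤ σb k) :
    ∀ x ∈ Set.Icc (0 : Fin n → ℝ) 1, (∀ i, |x i - xb i| ≤ ε) → P xb ≤ P x := by
  intro x hx hxε
  have hxb' : (Q + 2 • Matrix.diagonal σb).mulVec xb = f + σb := by
    rw [hxb, Matrix.mulVec_mulVec, Matrix.mul_nonsing_inv _ hdet, Matrix.one_mulVec]
  set d : Fin n → ℝ := fun i => x i - xb i with hd
  clear_value d
  have hQxb : ∀ i, Q.mulVec xb i - f i = σb i * (1 - 2 * xb i) := by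
    intro i
    rw [← Matrix.diagonal_smul] at hxb'
    have h := congrFun hxb' i
    simp [Matrix.add_mulVec, Matrix.mulVec_diagonal] at h
    linarith
  have hxd : x = xb + d := by funext i; simp [hd]
  have hcross : xb ⬝ᵥ Q.mulVec d = d ⬝ᵥ Q.mulVec xb := by
    rw [Matrix.dotProduct_mulVec, ← Matrix.mulVec_transpose, hQ.eq,
      dotProduct_comm]
  have expand : P x - P xb =
      (∑ i, (Q.mulVec xb i - f i) * d i) + (1/2) * (d ⬝ᵥ Q.mulVec d) := by
    rw [hP, hP, hxd]
    rw [Matrix.mulVec_add, add_dotProduct, dotProduct_add,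
      dotProduct_add, dotProduct_add, hcross]
    have : ∑ i, (Q.mulVec xb i - f i) * d i
        = d ⬝ᵥ Q.mulVec xb - f ⬝ᵥ d := by
      simp only [dotProduct, sub_mul]
      rw [Finset.sum_sub_distrib]
      congr 1
      exact Finset.sum_congr rfl fun j _ => mul_comm _ _
    rw [this]
    ring
  have key : P x - P xb =
      ∑ i, (σb i * (1 - 2 * xb i) * d i + (1/2) * (d i * Q.mulVec d i)) := by
    rw [expand, Finset.sum_add_distrib]
    congr 1
    · exact Finset.sum_congr rfl fun i _ => by rw [hQxb i]
    · rw [dotProduct, Finset.mul_sum]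
  rw [← sub_nonneg, key]
  apply Finset.sum_nonneg
  intro i _
  have hnpos : (0:ℝ) < n := by exact_mod_cast i.pos
  have hdabs : |d i| ≤ ε := by rw [hd]; exact hxε i
  have h1 : σb i * (1 - 2 * xb i) * d i = σb i * |d i| := by
    rcases hbin i with h | h
    · have hx0 := hx.1 i
      have h0 : 0 ≤ d i := by simp only [hd, h, Pi.zero_apply] at hx0 ⊢; linarith
      rw [abs_of_nonneg h0, h]; ring
    · have hx1 := hx.2 i
      have h0 : d i ≤ 0 := by simp only [hd, h, Pi.one_apply] at hx1 ⊢; linarith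
      rw [abs_of_nonpos h0, h]; ring
  have h2 : |d i * Q.mulVec d i| ≤ 2 * (σb i * |d i|) := by
    rw [abs_mul]
    have hb : |Q.mulVec d i| ≤ 2 * σb i / n * n := by
      rw [Matrix.mulVec, dotProduct]
      calc |∑ j, Q i j * d j| ≤ ∑ j, |Q i j * d j| := Finset.abs_sum_le_sum_abs _ _
        _ ≤ ∑ _j : Fin n, 2 * σb i / n := by
            apply Finset.sum_le_sum
            intro j _
            rw [abs_mul]
            have := hsmall i i j
            have hdj : |d j| ≤ ε := by rw [hd]; exact hxε j
            have habs : |Q i j| * |d j| ≤ |Q i j| * ε :=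
              mul_le_mul_of_nonneg_left hdj (abs_nonneg _)
            rw [le_div_iff₀ hnpos]
            nlinarith [mul_le_mul_of_nonneg_right habs (le_of_lt hnpos),
              abs_nonneg (Q i j)]
        _ = 2 * σb i / n * n := by rw [Finset.sum_const]; simp [mul_comm]
    have hb' : |Q.mulVec d i| ≤ 2 * σb i := by
      rwa [div_mul_cancel₀] at hb
      exact ne_of_gt hnpos
    calc |d i| * |Q.mulVec d i| ≤ |d i| * (2 * σb i) :=
          mul_le_mul_of_nonneg_left hb' (abs_nonneg _)
      _ = 2 * (σb i * |d i|) := by ring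
  rw [h1]
  have h3 : -(2 * (σb i * |d i|)) ≤ d i * Q.mulVec d i :=
    le_trans (neg_le_neg h2) (neg_abs_le _)
  linarith [h3]
end
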